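/- (Bias of the two-point Gaussian estimator against the true gradient.) Let d : ℕ, L ≥ 0 and μ > 0, and let f : EuclideanSpace ℝ (Fin d) → ℝ have L-Lipschitz gradient. Then for every x, ‖∫ ((f(x + μ • u) − f(x))/μ) • u ∂γ_d(u) − ∇f(x)‖ ≤ (μ/2)·L·(d+3)^{3/2}. -/

import Mathlib

/-!
Along the segment from `x` to `x + v` the `L`-Lipschitz gradient gives the Taylor bound
`|f (x + v) - f x - ⟪∇f x, v⟫| ≤ L / 2 * ‖v‖ ^ 2`. The standard Gaussian has identity covariance,
so `E[⟪∇f x, u⟫ • u] = ∇f x` and the bias is the mean of the Taylor remainder at `μ • u`, divided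
by `μ` and multiplied by `u`; its norm is at most `μ / 2 * L * E‖u‖ ^ 3`. Finally
`2 a ‖u‖³ ≤ a² ‖u‖² + ‖u‖⁴` with `a = √(d + 3)`, together with `E‖u‖² = d` and
`E‖u‖⁴ = d² + 2d` (from the Gaussian moments `1` and `3`, read off the moment generating function
`exp (t² / 2)`), gives `E‖u‖³ ≤ (d + 3) ^ (3 / 2)`.
-/

open MeasureTheory RealInnerProductSpace

/-- The standard Gaussian measure on `EuclideanSpace ℝ (Fin d)`, i.e. the product of `d`
copies of the real standard Gaussian measure. -/
noncomputable def stdGaussian (d : ℕ) : Measure (EuclideanSpace ℝ (Fin d)) :=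
  Measure.map (WithLp.toLp 2) (Measure.pi (fun _ : Fin d => ProbabilityTheory.gaussianReal 0 1))

open Real ProbabilityTheory Set

noncomputable def twoPointEstimator {E : Type*} [NormedAddCommGroup E] [NormedSpace ℝ E]
    (f : E → ℝ) (μ : ℝ) (x u : E) : E :=
  ((f (x + μ • u) - f x) / μ) • u

section LipschitzGradient

variable {E : Type*} [NormedAddCommGroup E] [InnerProductSpace ℝ E] [CompleteSpace E]
  {f : E → ℝ} {L : ℝ}

lemma abs_sub_sub_inner_gradient_le (hf : Differentiable ℝ f)
    (hlip : ∀ x y, ‖gradient f x - gradient f y‖ ≤ L * ‖x - y‖) (x v : E) :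
    |f (x + v) - f x - ⟪gradient f x, v⟫| ≤ L / 2 * ‖v‖ ^ 2 := by
  set φ : ℝ → ℝ := fun t => f (x + t • v) - f x - t * ⟪gradient f x, v⟫
  have hφ (t : ℝ) : HasDerivAt φ ⟪gradient f (x + t • v) - gradient f x, v⟫ t := by
    have hpath : HasDerivAt (fun s : ℝ => x + s • v) v t := by
      simpa using ((hasDerivAt_id t).smul_const v).const_add x
    refine ((((hf _).hasFDerivAt.comp_hasDerivAt t hpath).sub_const (f x)).sub
      ((hasDerivAt_id t).mul_const ⟪gradient f x, v⟫)).congr_deriv ?_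
    simp only [inner_sub_left, inner_gradient_left]
    ring
  have hbound (t : ℝ) (ht : t ∈ Ico (0 : ℝ) 1) :
      ‖⟪gradient f (x + t • v) - gradient f x, v⟫‖ ≤ L * ‖v‖ ^ 2 * t := by
    calc ‖⟪gradient f (x + t • v) - gradient f x, v⟫‖
        ≤ ‖gradient f (x + t • v) - gradient f x‖ * ‖v‖ := norm_inner_le_norm _ _
      _ ≤ L * ‖x + t • v - x‖ * ‖v‖ := by gcongr; exact hlip _ _
      _ = L * ‖v‖ ^ 2 * t := by
        rw [add_sub_cancel_left, norm_smul, Real.norm_of_nonneg ht.1]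
        ring
  have hB (t : ℝ) : HasDerivAt (fun s => L / 2 * ‖v‖ ^ 2 * s ^ 2) (L * ‖v‖ ^ 2 * t) t := by
    refine ((hasDerivAt_pow 2 t).const_mul (L / 2 * ‖v‖ ^ 2)).congr_deriv ?_
    norm_num
    ring
  have := image_norm_le_of_norm_deriv_right_le_deriv_boundary (a := 0) (b := 1)
    (fun t _ => (hφ t).continuousAt.continuousWithinAt) (fun t _ => (hφ t).hasDerivWithinAt)
    (by simp [φ]) hB hbound (right_mem_Icc.2 zero_le_one)
  simpa [φ] using this

lemma norm_twoPointEstimator_sub_inner_smul_le {μ : ℝ} (hμ : 0 < μ) (hf : Differentiable ℝ f)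
    (hlip : ∀ x y, ‖gradient f x - gradient f y‖ ≤ L * ‖x - y‖) (x u : E) :
    ‖twoPointEstimator f μ x u - ⟪gradient f x, u⟫ • u‖ ≤ μ / 2 * L * ‖u‖ ^ 3 := by
  have hsmul : twoPointEstimator f μ x u - ⟪gradient f x, u⟫ • u =
      ((f (x + μ • u) - f x - ⟪gradient f x, μ • u⟫) / μ) • u := by
    rw [twoPointEstimator, ← sub_smul, real_inner_smul_right]
    congr 1
    field_simp
  have htaylor := abs_sub_sub_inner_gradient_le hf hlip x (μ • u)
  rw [norm_smul, Real.norm_of_nonneg hμ.le] at htaylor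
  rw [hsmul, norm_smul, Real.norm_eq_abs, abs_div, abs_of_pos hμ]
  calc |f (x + μ • u) - f x - ⟪gradient f x, μ • u⟫| / μ * ‖u‖
      ≤ L / 2 * (μ * ‖u‖) ^ 2 / μ * ‖u‖ := by gcongr
    _ = μ / 2 * L * ‖u‖ ^ 3 := by field_simp

end LipschitzGradient

namespace ProbabilityTheory

lemma deriv_mul_exp_half_sq {p p' : ℝ → ℝ} (hp : ∀ t, HasDerivAt p (p' t) t) :
    deriv (fun t => p t * exp (t ^ 2 / 2)) = fun t => (p' t + t * p t) * exp (t ^ 2 / 2) := by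
  funext t
  rw [((hp t).fun_mul ((hasDerivAt_pow 2 t).div_const 2).exp).deriv]
  push_cast
  ring

lemma iteratedDeriv_exp_half_sq :
    iteratedDeriv 2 (fun t => exp (t ^ 2 / 2)) 0 = 1 ∧
      iteratedDeriv 4 (fun t => exp (t ^ 2 / 2)) 0 = 3 := by
  have d1 : deriv (fun t => exp (t ^ 2 / 2)) = fun t => t * exp (t ^ 2 / 2) := by
    simpa using deriv_mul_exp_half_sq (fun t => hasDerivAt_const t (1 : ℝ))
  have d2 : deriv (fun t => t * exp (t ^ 2 / 2)) = fun t => (1 + t ^ 2) * exp (t ^ 2 / 2) := by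
    rw [deriv_mul_exp_half_sq (p := fun t => t) hasDerivAt_id']; ring_nf
  have d3 : deriv (fun t => (1 + t ^ 2) * exp (t ^ 2 / 2)) =
      fun t => (3 * t + t ^ 3) * exp (t ^ 2 / 2) := by
    rw [deriv_mul_exp_half_sq fun t => (hasDerivAt_pow 2 t).const_add 1]; ring_nf
  have d4 : deriv (fun t => (3 * t + t ^ 3) * exp (t ^ 2 / 2)) =
      fun t => (3 + 6 * t ^ 2 + t ^ 4) * exp (t ^ 2 / 2) := by
    rw [deriv_mul_exp_half_sq (p := fun t => 3 * t + t ^ 3)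
      fun t => ((hasDerivAt_id' t).const_mul 3).add (hasDerivAt_pow 3 t)]
    ring_nf
  simp only [iteratedDeriv_succ', iteratedDeriv_zero, d1, d2, d3, d4]
  norm_num

lemma integral_pow_gaussianReal (n : ℕ) :
    ∫ y, y ^ n ∂gaussianReal 0 1 = iteratedDeriv n (fun t => exp (t ^ 2 / 2)) 0 := by
  have h := iteratedDeriv_mgf_zero (X := id) (μ := gaussianReal 0 1) (by simp) n
  simp only [mgf_id_gaussianReal] at h
  simpa using h.symm

lemma integral_sq_gaussianReal : ∫ y, y ^ 2 ∂gaussianReal 0 1 = 1 :=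
  (integral_pow_gaussianReal 2).trans iteratedDeriv_exp_half_sq.1

lemma integral_pow_four_gaussianReal : ∫ y, y ^ 4 ∂gaussianReal 0 1 = 3 :=
  (integral_pow_gaussianReal 4).trans iteratedDeriv_exp_half_sq.2

section StdGaussian

variable {E : Type*} [NormedAddCommGroup E] [InnerProductSpace ℝ E] [FiniteDimensional ℝ E]
  [MeasurableSpace E] [BorelSpace E]

lemma integrable_norm_pow_stdGaussian (k : ℕ) : Integrable (fun u => ‖u‖ ^ k) (stdGaussian E) :=
  (IsGaussian.memLp_id _ k (by simp)).integrable_norm_pow'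

lemma integrable_inner_smul_stdGaussian (g : E) :
    Integrable (fun u => ⟪g, u⟫ • u) (stdGaussian E) := by
  refine ((integrable_norm_pow_stdGaussian 2).const_mul ‖g‖).mono' (by fun_prop)
    (ae_of_all _ fun u => ?_)
  calc ‖⟪g, u⟫ • u‖ = |⟪g, u⟫| * ‖u‖ := by rw [norm_smul, Real.norm_eq_abs]
    _ ≤ ‖g‖ * ‖u‖ * ‖u‖ := by gcongr; exact abs_real_inner_le_norm g u
    _ = ‖g‖ * ‖u‖ ^ 2 := by ring

lemma integral_inner_smul_stdGaussian (g : E) : ∫ u, ⟪g, u⟫ • u ∂stdGaussian E = g := by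
  refine ext_inner_left ℝ fun h => ?_
  rw [← integral_inner (integrable_inner_smul_stdGaussian g)]
  have hcov := covarianceBilin_apply (IsGaussian.memLp_two_id (μ := stdGaussian E)) g h
  simp only [covarianceBilin_stdGaussian, innerSL_apply_apply ℝ, id_eq, integral_id_stdGaussian,
    sub_zero] at hcov
  simpa [real_inner_smul_right, real_inner_comm h] using hcov.symm

lemma norm_integral_twoPointEstimator_sub_gradient_le {f : E → ℝ} {L μ : ℝ} (hμ : 0 < μ)
    (hf : Differentiable ℝ f) (hlip : ∀ x y, ‖gradient f x - gradient f y‖ ≤ L * ‖x - y‖)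
    (x : E) :
    ‖∫ u, twoPointEstimator f μ x u ∂stdGaussian E - gradient f x‖ ≤
      μ / 2 * L * ∫ u, ‖u‖ ^ 3 ∂stdGaussian E := by
  have hbias : Integrable (fun u => twoPointEstimator f μ x u - ⟪gradient f x, u⟫ • u)
      (stdGaussian E) :=
    ((integrable_norm_pow_stdGaussian 3).const_mul _).mono'
      (by have := hf.continuous; unfold twoPointEstimator; fun_prop)
      (ae_of_all _ (norm_twoPointEstimator_sub_inner_smul_le hμ hf hlip x))
  have hinner := integrable_inner_smul_stdGaussian (E := E) (gradient f x)
  have hest : Integrable (twoPointEstimator f μ x) (stdGaussian E) :=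
    (hbias.add hinner).congr (ae_of_all _ fun u => sub_add_cancel _ _)
  calc ‖∫ u, twoPointEstimator f μ x u ∂stdGaussian E - gradient f x‖
      = ‖∫ u, twoPointEstimator f μ x u - ⟪gradient f x, u⟫ • u ∂stdGaussian E‖ := by
        rw [integral_sub hest hinner, integral_inner_smul_stdGaussian]
    _ ≤ ∫ u, μ / 2 * L * ‖u‖ ^ 3 ∂stdGaussian E :=
        norm_integral_le_of_norm_le ((integrable_norm_pow_stdGaussian 3).const_mul _)
          (ae_of_all _ (norm_twoPointEstimator_sub_inner_smul_le hμ hf hlip x))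
    _ = μ / 2 * L * ∫ u, ‖u‖ ^ 3 ∂stdGaussian E := integral_const_mul _ _

end StdGaussian

section Euclidean

variable {ι : Type*} [Fintype ι]

lemma integral_comp_eval_pi_gaussianReal {g : ℝ → ℝ} (hg : Continuous g) (i : ι) :
    ∫ x, g (x i) ∂Measure.pi (fun _ : ι => gaussianReal 0 1) = ∫ y, g y ∂gaussianReal 0 1 := by
  rw [← integral_map (measurable_pi_apply i).aemeasurable hg.aestronglyMeasurable,
    (measurePreserving_eval _ i).map_eq]

lemma integral_sq_mul_sq_pi_gaussianReal [DecidableEq ι] (i j : ι) :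
    ∫ x, x i ^ 2 * x j ^ 2 ∂Measure.pi (fun _ : ι => gaussianReal 0 1) =
      if i = j then 3 else 1 := by
  by_cases hij : i = j
  · subst hij
    rw [if_pos rfl]
    simp_rw [← pow_add]
    exact (integral_comp_eval_pi_gaussianReal (continuous_pow 4) i).trans
      integral_pow_four_gaussianReal
  · have hind : IndepFun (fun x : ι → ℝ => x i) (fun x => x j)
        (Measure.pi fun _ : ι => gaussianReal 0 1) :=
      (iIndepFun_pi (X := fun _ => id) fun _ => aemeasurable_id).indepFun hij
    rw [if_neg hij, hind.integral_fun_comp_mul_comp (measurable_pi_apply i).aemeasurable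
      (measurable_pi_apply j).aemeasurable (continuous_pow 2).aestronglyMeasurable
      (continuous_pow 2).aestronglyMeasurable,
      integral_comp_eval_pi_gaussianReal (continuous_pow 2),
      integral_comp_eval_pi_gaussianReal (continuous_pow 2), integral_sq_gaussianReal, one_mul]

lemma integral_stdGaussian_eq_integral_pi {E : Type*} [NormedAddCommGroup E] [NormedSpace ℝ E]
    (F : EuclideanSpace ℝ ι → E) :
    ∫ u, F u ∂stdGaussian (EuclideanSpace ℝ ι) =
      ∫ x, F (WithLp.toLp 2 x) ∂Measure.pi (fun _ : ι => gaussianReal 0 1) := by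
  rw [← map_pi_eq_stdGaussian]
  exact integral_map_equiv (MeasurableEquiv.toLp 2 (ι → ℝ)) F

lemma integral_norm_sq_stdGaussian :
    ∫ u, ‖u‖ ^ 2 ∂stdGaussian (EuclideanSpace ℝ ι) = Fintype.card ι := by
  simp_rw [integral_stdGaussian_eq_integral_pi, EuclideanSpace.real_norm_sq_eq]
  rw [integral_finsetSum]
  · simp [integral_comp_eval_pi_gaussianReal (continuous_pow 2), integral_sq_gaussianReal]
  · exact fun i _ => Integrable.of_integral_ne_zero (by
      simp [integral_comp_eval_pi_gaussianReal (continuous_pow 2), integral_sq_gaussianReal])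

lemma integral_norm_pow_four_stdGaussian :
    ∫ u, ‖u‖ ^ 4 ∂stdGaussian (EuclideanSpace ℝ ι) =
      (Fintype.card ι : ℝ) ^ 2 + 2 * Fintype.card ι := by
  classical
  have hsq (u : EuclideanSpace ℝ ι) : ‖u‖ ^ 4 = ∑ i, ∑ j, u i ^ 2 * u j ^ 2 := by
    rw [show ‖u‖ ^ 4 = (‖u‖ ^ 2) ^ 2 by ring, EuclideanSpace.real_norm_sq_eq, sq,
      Finset.sum_mul_sum]
  have hint (i j : ι) : Integrable (fun x : ι → ℝ => x i ^ 2 * x j ^ 2)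
      (Measure.pi fun _ : ι => gaussianReal 0 1) :=
    Integrable.of_integral_ne_zero (by
      rw [integral_sq_mul_sq_pi_gaussianReal]; split_ifs <;> norm_num)
  simp_rw [integral_stdGaussian_eq_integral_pi, hsq]
  rw [integral_finsetSum _ fun i _ => integrable_finsetSum _ fun j _ => hint i j]
  simp_rw [integral_finsetSum _ fun j _ => hint _ j]
  have hsplit (i j : ι) : (if i = j then (3 : ℝ) else 1) = 1 + if i = j then 2 else 0 := by
    split_ifs <;> norm_num
  simp [integral_sq_mul_sq_pi_gaussianReal, hsplit, Finset.sum_add_distrib]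
  ring

lemma integral_norm_pow_three_stdGaussian_le :
    ∫ u, ‖u‖ ^ 3 ∂stdGaussian (EuclideanSpace ℝ ι) ≤
      ((Fintype.card ι : ℝ) + 3) ^ ((3 : ℝ) / 2) := by
  set n : ℝ := (Fintype.card ι : ℝ)
  have hpow : (n + 3) ^ ((3 : ℝ) / 2) = √(n + 3) ^ 3 := by
    rw [Real.sqrt_eq_rpow, ← Real.rpow_natCast, ← Real.rpow_mul (by positivity)]
    norm_num
  set a := √(n + 3)
  have ha : 0 < a := Real.sqrt_pos.2 (by positivity)
  have ha2 : a ^ 2 = n + 3 := Real.sq_sqrt (by positivity)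
  have hmono := integral_mono ((integrable_norm_pow_stdGaussian 3).const_mul (2 * a))
    (((integrable_norm_pow_stdGaussian 2).const_mul (a ^ 2)).add
      (integrable_norm_pow_stdGaussian 4))
    fun (u : EuclideanSpace ℝ ι) => show 2 * a * ‖u‖ ^ 3 ≤ a ^ 2 * ‖u‖ ^ 2 + ‖u‖ ^ 4 by
      nlinarith [sq_nonneg (a * ‖u‖ - ‖u‖ ^ 2)]
  rw [integral_const_mul, integral_add' ((integrable_norm_pow_stdGaussian 2).const_mul _)
    (integrable_norm_pow_stdGaussian 4), integral_const_mul, integral_norm_sq_stdGaussian,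
    integral_norm_pow_four_stdGaussian] at hmono
  rw [hpow]
  nlinarith [Nat.cast_nonneg (α := ℝ) (Fintype.card ι)]

end Euclidean

end ProbabilityTheory

/-- **Bias of the two-point Gaussian estimator against the true gradient.**
If `f` has `L`-Lipschitz gradient and `μ > 0`, then the mean of the two-point zeroth-order
gradient estimator at `x` differs from `∇f(x)` by at most `(μ/2)·L·(d+3)^{3/2}`. -/
theorem two_point_estimator_bias
    (d : ℕ) (L μ : ℝ) (hL : 0 ≤ L) (hμ : 0 < μ)
    (f : EuclideanSpace ℝ (Fin d) → ℝ)
    (hdiff : Differentiable ℝ f)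
    (hlip : ∀ x y, ‖gradient f x - gradient f y‖ ≤ L * ‖x - y‖) :
    ∀ x : EuclideanSpace ℝ (Fin d),
      ‖(∫ u : EuclideanSpace ℝ (Fin d), ((f (x + μ • u) - f x) / μ) • u ∂(stdGaussian d))
          - gradient f x‖ ≤ μ / 2 * L * ((d : ℝ) + 3) ^ ((3 : ℝ) / 2) := by
  intro x
  rw [_root_.stdGaussian, map_pi_eq_stdGaussian]
  calc _ ≤ μ / 2 * L * ∫ u, ‖u‖ ^ 3 ∂stdGaussian (EuclideanSpace ℝ (Fin d)) :=
        norm_integral_twoPointEstimator_sub_gradient_le hμ hdiff hlip x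
    _ ≤ μ / 2 * L * ((d : ℝ) + 3) ^ ((3 : ℝ) / 2) := by
        gcongr
        simpa using integral_norm_pow_three_stdGaussian_le (ι := Fin d)
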